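/- Let p ≥ 1, k ≥ 1, let α : Fin k → ℝ with α j > 0 and ∑ j, α j = 1, and let t : Fin k → (Fin p → ℝ). Let μ = ∑ j, α j • N(t j, I_p) be the Gaussian mixture on Fin p → ℝ, with mean m = ∑ j, α j • t j and centered centers c j = t j − m. Then for every index a, ∫ (x a − m a)⁴ dμ = ∑ j, α j · ((c j a)⁴ + 6(c j a)² + 3), and for all distinct indices a ≠ b, ∫ (x a − m a)²(x b − m b)² dμ = ∑ j, α j · ((c j a)² + 1)((c j b)² + 1). -/

import Mathlib

/-!
Each component `N(t j, I_p)` has independent coordinates, so every moment of the mixture is the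
`α`-weighted sum of products of one-dimensional moments `E[(Z - r)ⁿ]` with `Z ~ N(s, 1)`, that is,
of raw moments of `N(s - r, 1)`. The raw moments of `N(μ, v)` are the derivatives at `0` of its
moment generating function `exp (μ u + v u² / 2)`, whose `n`-th derivative is a polynomial in
`μ + v u` times itself; this gives `μ² + v` and `μ⁴ + 6 v μ² + 3 v²`.
-/

open MeasureTheory ProbabilityTheory Matrix

/-- The mean vector of a measure on `Fin p → ℝ`. -/
noncomputable def meanVec {p : ℕ} (μ : Measure (Fin p → ℝ)) : Fin p → ℝ :=
  fun a => ∫ x, x a ∂μ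

/-- The covariance matrix `COV(μ)` with entries `∫ (x a − m a)(x b − m b) dμ`. -/
noncomputable def COV {p : ℕ} (μ : Measure (Fin p → ℝ)) : Matrix (Fin p) (Fin p) ℝ :=
  Matrix.of fun a b => ∫ x, (x a - meanVec μ a) * (x b - meanVec μ b) ∂μ

/-- The fourth-order scatter matrix `COV4(μ)` with entries
`(1/(p+2)) ∫ ((x−m)ᵀ (COV μ)⁻¹ (x−m)) (x a − m a)(x b − m b) dμ`. -/
noncomputable def COV4 {p : ℕ} (μ : Measure (Fin p → ℝ)) : Matrix (Fin p) (Fin p) ℝ :=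
  Matrix.of fun a b =>
    (1 / ((p : ℝ) + 2)) *
      ∫ x, (dotProduct (fun i => x i - meanVec μ i)
          ((COV μ)⁻¹.mulVec fun i => x i - meanVec μ i)) *
        ((x a - meanVec μ a) * (x b - meanVec μ b)) ∂μ

/-- The product Gaussian measure `N(t, I_p)` on `Fin p → ℝ`. -/
noncomputable def gaussPi (p : ℕ) (t : Fin p → ℝ) : Measure (Fin p → ℝ) :=
  Measure.pi fun i => gaussianReal (t i) 1

open scoped NNReal

namespace ProbabilityTheory

open Polynomial

noncomputable def gaussianMomentPoly (v : ℝ) : ℕ → ℝ[X]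
  | 0 => 1
  | n + 1 => X * gaussianMomentPoly v n + C v * derivative (gaussianMomentPoly v n)

lemma iteratedDeriv_exp_quadratic (μ v : ℝ) (n : ℕ) :
    iteratedDeriv n (fun t => Real.exp (μ * t + v * t ^ 2 / 2)) =
      fun t => (gaussianMomentPoly v n).eval (μ + v * t) * Real.exp (μ * t + v * t ^ 2 / 2) := by
  induction n with
  | zero => ext t; simp [gaussianMomentPoly]
  | succ n ih =>
    ext t
    rw [iteratedDeriv_succ, ih]
    have hq : HasDerivAt (fun t => (gaussianMomentPoly v n).eval (μ + v * t))
        ((gaussianMomentPoly v n).derivative.eval (μ + v * t) * v) t := by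
      have hu : HasDerivAt (fun t => μ + v * t) v t := by
        simpa using ((hasDerivAt_id t).const_mul v).const_add μ
      exact ((gaussianMomentPoly v n).hasDerivAt (μ + v * t)).comp t hu
    have he : HasDerivAt (fun t => Real.exp (μ * t + v * t ^ 2 / 2))
        ((μ + v * t) * Real.exp (μ * t + v * t ^ 2 / 2)) t := by
      convert (((hasDerivAt_id' t).const_mul μ).fun_add
        (((hasDerivAt_pow 2 t).const_mul v).div_const 2)).exp using 1
      ring
    rw [(hq.fun_mul he).deriv]
    simp only [gaussianMomentPoly, eval_add, eval_mul, eval_X, eval_C]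
    ring

lemma zero_mem_interior_integrableExpSet_id_gaussianReal (μ : ℝ) (v : ℝ≥0) :
    (0 : ℝ) ∈ interior (integrableExpSet id (gaussianReal μ v)) := by
  simp [integrableExpSet_id_gaussianReal]

lemma integral_pow_gaussianReal (μ : ℝ) (v : ℝ≥0) (n : ℕ) :
    ∫ x, x ^ n ∂gaussianReal μ v = (gaussianMomentPoly v n).eval μ := by
  have := iteratedDeriv_mgf_zero (zero_mem_interior_integrableExpSet_id_gaussianReal μ v) n
  rw [mgf_id_gaussianReal, iteratedDeriv_exp_quadratic] at this
  simpa using this.symm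

lemma integral_pow_two_gaussianReal (μ : ℝ) (v : ℝ≥0) :
    ∫ x, x ^ 2 ∂gaussianReal μ v = μ ^ 2 + v := by
  simp only [integral_pow_gaussianReal, gaussianMomentPoly, derivative_add, derivative_mul,
    derivative_X, derivative_C, derivative_one, derivative_zero, eval_add, eval_mul, eval_X,
    eval_C, eval_one, eval_zero]
  ring

lemma integral_pow_four_gaussianReal (μ : ℝ) (v : ℝ≥0) :
    ∫ x, x ^ 4 ∂gaussianReal μ v = μ ^ 4 + 6 * v * μ ^ 2 + 3 * v ^ 2 := by
  simp only [integral_pow_gaussianReal, gaussianMomentPoly, derivative_add, derivative_mul,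
    derivative_X, derivative_C, derivative_one, derivative_zero, eval_add, eval_mul, eval_X,
    eval_C, eval_one, eval_zero]
  ring

lemma integral_sub_pow_gaussianReal (μ r : ℝ) (v : ℝ≥0) (n : ℕ) :
    ∫ x, (x - r) ^ n ∂gaussianReal μ v = ∫ x, x ^ n ∂gaussianReal (μ - r) v := by
  rw [← gaussianReal_map_sub_const r, integral_map (by fun_prop) (by fun_prop)]

lemma integrable_sub_pow_gaussianReal (μ r : ℝ) (v : ℝ≥0) (n : ℕ) :
    Integrable (fun x => (x - r) ^ n) (gaussianReal μ v) := by
  have := integrable_pow_of_mem_interior_integrableExpSet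
    (zero_mem_interior_integrableExpSet_id_gaussianReal (μ - r) v) n
  rw [← gaussianReal_map_sub_const r, integrable_map_measure (by fun_prop) (by fun_prop)] at this
  exact this

end ProbabilityTheory

namespace MeasureTheory

lemma integral_sum_ofReal_smul_measure {Ω ι : Type*} [MeasurableSpace Ω] {s : Finset ι}
    {w : ι → ℝ} (hw : ∀ j ∈ s, 0 ≤ w j) {ν : ι → Measure Ω} {f : Ω → ℝ}
    (hf : ∀ j ∈ s, Integrable f (ν j)) :
    ∫ x, f x ∂(∑ j ∈ s, ENNReal.ofReal (w j) • ν j) = ∑ j ∈ s, w j * ∫ x, f x ∂ν j := by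
  rw [integral_finsetSum_measure fun j hj => (hf j hj).smul_measure ENNReal.ofReal_ne_top]
  refine Finset.sum_congr rfl fun j hj => ?_
  rw [integral_smul_measure, ENNReal.toReal_ofReal (hw j hj), smul_eq_mul]

variable {ι : Type*} [Fintype ι] {X : ι → Type*} {mX : ∀ i, MeasurableSpace (X i)}
  {μ : (i : ι) → Measure (X i)} [∀ i, IsProbabilityMeasure (μ i)]

lemma indepFun_eval_pi {a b : ι} (hab : a ≠ b) :
    IndepFun (fun x : Π i, X i => x a) (fun x => x b) (Measure.pi μ) :=
  (iIndepFun_pi (X := fun _ => id) fun _ => aemeasurable_id).indepFun hab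

lemma integrable_comp_eval_mul_comp_eval {a b : ι} (hab : a ≠ b) {f : X a → ℝ} {g : X b → ℝ}
    (hf : Integrable f (μ a)) (hg : Integrable g (μ b)) :
    Integrable (fun x => f (x a) * g (x b)) (Measure.pi μ) :=
  ((indepFun_eval_pi hab).comp₀ (measurable_pi_apply a).aemeasurable
    (measurable_pi_apply b).aemeasurable
    (by rw [(measurePreserving_eval μ a).map_eq]; exact hf.aemeasurable)
    (by rw [(measurePreserving_eval μ b).map_eq]; exact hg.aemeasurable)).integrable_mul
    (integrable_comp_eval hf) (integrable_comp_eval hg)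

lemma integral_comp_eval_mul_comp_eval {a b : ι} (hab : a ≠ b) {f : X a → ℝ} {g : X b → ℝ}
    (hf : AEStronglyMeasurable f (μ a)) (hg : AEStronglyMeasurable g (μ b)) :
    ∫ x, f (x a) * g (x b) ∂Measure.pi μ = (∫ y, f y ∂μ a) * ∫ y, g y ∂μ b := by
  rw [(indepFun_eval_pi hab).integral_fun_comp_mul_comp
    (measurable_pi_apply a).aemeasurable (measurable_pi_apply b).aemeasurable
    (by rwa [(measurePreserving_eval μ a).map_eq]) (by rwa [(measurePreserving_eval μ b).map_eq]),
    integral_comp_eval hf, integral_comp_eval hg]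

end MeasureTheory

section gaussPi

variable {p : ℕ} (t : Fin p → ℝ)

lemma integrable_sub_pow_gaussPi (a : Fin p) (r : ℝ) (n : ℕ) :
    Integrable (fun x => (x a - r) ^ n) (gaussPi p t) :=
  integrable_comp_eval (μ := fun i => gaussianReal (t i) 1)
    (integrable_sub_pow_gaussianReal _ _ _ n)

lemma integrable_sub_sq_mul_sub_sq_gaussPi {a b : Fin p} (hab : a ≠ b) (r s : ℝ) :
    Integrable (fun x => (x a - r) ^ 2 * (x b - s) ^ 2) (gaussPi p t) :=
  integrable_comp_eval_mul_comp_eval (μ := fun i => gaussianReal (t i) 1) hab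
    (integrable_sub_pow_gaussianReal _ _ _ 2) (integrable_sub_pow_gaussianReal _ _ _ 2)

lemma integral_sub_pow_four_gaussPi (a : Fin p) (r : ℝ) :
    ∫ x, (x a - r) ^ 4 ∂gaussPi p t = (t a - r) ^ 4 + 6 * (t a - r) ^ 2 + 3 := by
  rw [gaussPi, integral_comp_eval (μ := fun i => gaussianReal (t i) 1)
      (f := fun y => (y - r) ^ 4) (by fun_prop),
    integral_sub_pow_gaussianReal, integral_pow_four_gaussianReal]
  push_cast
  ring

lemma integral_sub_sq_mul_sub_sq_gaussPi {a b : Fin p} (hab : a ≠ b) (r s : ℝ) :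
    ∫ x, (x a - r) ^ 2 * (x b - s) ^ 2 ∂gaussPi p t =
      ((t a - r) ^ 2 + 1) * ((t b - s) ^ 2 + 1) := by
  rw [gaussPi, integral_comp_eval_mul_comp_eval (μ := fun i => gaussianReal (t i) 1)
      (f := fun y => (y - r) ^ 2) (g := fun y => (y - s) ^ 2) hab (by fun_prop) (by fun_prop),
    integral_sub_pow_gaussianReal, integral_sub_pow_gaussianReal,
    integral_pow_two_gaussianReal, integral_pow_two_gaussianReal]
  push_cast
  ring

end gaussPi

theorem gaussian_mixture_fourth_moments_general (p k : ℕ)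
    (α : Fin k → ℝ) (hα : ∀ j, 0 < α j)
    (t : Fin k → Fin p → ℝ)
    (μ : Measure (Fin p → ℝ))
    (hμ : μ = ∑ j, ENNReal.ofReal (α j) • gaussPi p (t j))
    (m : Fin p → ℝ)
    (c : Fin k → Fin p → ℝ) (hc : ∀ j, c j = t j - m) :
    (∀ a : Fin p, ∫ x, (x a - m a) ^ 4 ∂μ =
        ∑ j, α j * ((c j a) ^ 4 + 6 * (c j a) ^ 2 + 3)) ∧
      (∀ a b : Fin p, a ≠ b →
        ∫ x, (x a - m a) ^ 2 * (x b - m b) ^ 2 ∂μ =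
          ∑ j, α j * (((c j a) ^ 2 + 1) * ((c j b) ^ 2 + 1))) := by
  have hc' : ∀ j a, c j a = t j a - m a := fun j a => congrFun (hc j) a
  have hα' : ∀ j ∈ Finset.univ, 0 ≤ α j := fun j _ => (hα j).le
  subst hμ
  refine ⟨fun a => ?_, fun a b hab => ?_⟩
  · rw [integral_sum_ofReal_smul_measure hα' fun j _ =>
      integrable_sub_pow_gaussPi (t j) a (m a) 4]
    simp only [integral_sub_pow_four_gaussPi, hc']
  · rw [integral_sum_ofReal_smul_measure hα' fun j _ =>
      integrable_sub_sq_mul_sub_sq_gaussPi (t j) hab (m a) (m b)]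
    simp only [integral_sub_sq_mul_sub_sq_gaussPi _ hab, hc']

/-- Fourth-order moments of a Gaussian mixture `∑ j, α j • N(t j, I_p)`:
`E[(x a − m a)⁴] = ∑ j α j ((c j a)⁴ + 6 (c j a)² + 3)` and, for `a ≠ b`,
`E[(x a − m a)² (x b − m b)²] = ∑ j α j ((c j a)² + 1)((c j b)² + 1)`. -/
theorem gaussian_mixture_fourth_moments (p k : ℕ) (hp : 1 ≤ p) (hk : 1 ≤ k)
    (α : Fin k → ℝ) (hα : ∀ j, 0 < α j) (hsum : ∑ j, α j = 1)
    (t : Fin k → Fin p → ℝ)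
    (μ : Measure (Fin p → ℝ))
    (hμ : μ = ∑ j, ENNReal.ofReal (α j) • gaussPi p (t j))
    (m : Fin p → ℝ) (hm : m = ∑ j, α j • t j)
    (c : Fin k → Fin p → ℝ) (hc : ∀ j, c j = t j - m) :
    (∀ a : Fin p, ∫ x, (x a - m a) ^ 4 ∂μ =
        ∑ j, α j * ((c j a) ^ 4 + 6 * (c j a) ^ 2 + 3)) ∧
      (∀ a b : Fin p, a ≠ b →
        ∫ x, (x a - m a) ^ 2 * (x b - m b) ^ 2 ∂μ =
          ∑ j, α j * (((c j a) ^ 2 + 1) * ((c j b) ^ 2 + 1))) :=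
  gaussian_mixture_fourth_moments_general p k α hα t μ hμ m c hc
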